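/- Let G be a 2-connected graph and let x and y be distinct vertices of G. If the independence number of G - {x,y} is at most 2, then every xy-fiber contains every vertex of G of maximum degree, or G - {x,y} is the disjoint union of two complete graphs. -/

import Mathlib

/-!
Let `p` be an `xy`-fiber missing a vertex `z` of maximum degree and let `H` be the component of
`G - V(p)` containing `z`. Rerouting `p` through `H` shows that no two attachment positions of `H`
on `p` are consecutive; rerouting through `H` and a crossing edge, together with `α ≤ 2` applied
to `z, p_{i+1}, p_{j+1}`, shows that any two attachment positions `i < j` have `i ≤ 1` and
`j ≥ L - 1`. With 2-connectivity, `H` attaches at exactly two positions `a < b`.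
If `a = 1` (or symmetrically `b = L - 1`), then `H` is a clique and `deg z ≤ |H| + 1`, whereas
`deg p_1 ≥ |H| + 2`: either `p_1` sees all of `H`, or it sees `p_0, p_2, …, p_{b-1}` and
`b ≥ |H| + 2` because a Hamiltonian path of `H` can replace `p_1 … p_b`. Hence `a = 0` and
`b = L`; then every vertex off `p` lies in `H`, and `α ≤ 2` makes the interior of `p` and `H`
two cliques with no edges between them.
-/

open SimpleGraph

namespace GallaiFormal

variable {V : Type}

/-- A vertex `v` is a *Gallai vertex* of `G` if every longest path of `G` contains `v`. -/
def IsGallaiVertex (G : SimpleGraph V) (v : V) : Prop :=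
  ∀ ⦃a b : V⦄ (p : G.Walk a b), p.IsPath →
    (∀ ⦃c d : V⦄ (q : G.Walk c d), q.IsPath → q.length ≤ p.length) → v ∈ p.support

/-- `G` has no induced subgraph isomorphic to `H` (`G` is `H`-free). -/
def IsFree {W : Type} (G : SimpleGraph V) (H : SimpleGraph W) : Prop :=
  ¬ ∃ s : Set V, Nonempty (H ≃g (G.induce s))

/-- `A` is an independent set of `G`. -/
def IsIndepSet (G : SimpleGraph V) (A : Set V) : Prop :=
  A.Pairwise fun a b => ¬ G.Adj a b

/-- `H` is (the vertex set of) a connected component of `G - s`. -/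
def IsCompOutside (G : SimpleGraph V) (s : Set V) (H : Set V) : Prop :=
  H.Nonempty ∧ Disjoint H s ∧ (G.induce H).Connected ∧
    ∀ u ∈ H, ∀ v : V, G.Adj u v → v ∉ s → v ∈ H

/-- The set of attachment points of `H` on the path `p`. -/
def attachSet (G : SimpleGraph V) {x y : V} (p : G.Walk x y) (H : Set V) : Set V :=
  {w | w ∈ p.support ∧ ∃ u ∈ H, G.Adj u w}

/-- `p` is an `x`-fiber: a longest path among paths having its first endpoint as an endpoint. -/
def IsEndFiber (G : SimpleGraph V) {x y : V} (p : G.Walk x y) : Prop :=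
  p.IsPath ∧ ∀ (z : V) (q : G.Walk x z), q.IsPath → q.length ≤ p.length

/-- `p` is an `xy`-fiber: a longest path among paths with the same two endpoints. -/
def IsFiberBetween (G : SimpleGraph V) {x y : V} (p : G.Walk x y) : Prop :=
  p.IsPath ∧ ∀ q : G.Walk x y, q.IsPath → q.length ≤ p.length

/-- `p` is a longest path of `G`. -/
def IsLongestPath (G : SimpleGraph V) {x y : V} (p : G.Walk x y) : Prop :=
  p.IsPath ∧ ∀ ⦃a b : V⦄ (q : G.Walk a b), q.IsPath → q.length ≤ p.length

/-- The (index) interval `[a, b]` of positions on `p` is a maximal interval avoiding `S`;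
these intervals correspond to the components of `P - S`. -/
def IsGapInterval (G : SimpleGraph V) {x y : V} (p : G.Walk x y) (S : Set V) (a b : ℕ) : Prop :=
  a ≤ b ∧ b ≤ p.length ∧ (∀ i, a ≤ i → i ≤ b → p.getVert i ∉ S) ∧
    (a = 0 ∨ p.getVert (a - 1) ∈ S) ∧ (b = p.length ∨ p.getVert (b + 1) ∈ S)

/-- The rank of the vertex at position `j` on `p` (w.r.t. the attachment set `S`): the maximum
length of a subpath of `p` ending at position `j` and avoiding `S`. -/
noncomputable def rankAt (G : SimpleGraph V) {x y : V} (p : G.Walk x y) (S : Set V) (j : ℕ) : ℕ :=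
  sSup {r : ℕ | ∃ a : ℕ, a + r = j ∧ ∀ i, a ≤ i → i ≤ j → p.getVert i ∉ S}

/-- `G` is `k`-connected. -/
def IsKConnected [Fintype V] (k : ℕ) (G : SimpleGraph V) : Prop :=
  k < Fintype.card V ∧ ∀ s : Set V, s.ncard < k → (G.induce sᶜ).Connected

/-- `B` is (the vertex set of) a block of `G`: a maximal connected subgraph without cut-vertices. -/
def IsBlock (G : SimpleGraph V) (B : Set V) : Prop :=
  (G.induce B).Connected ∧ (∀ v ∈ B, (G.induce (B \ {v})).Preconnected) ∧
    ∀ B' : Set V, B ⊆ B' → (G.induce B').Connected →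
      (∀ v ∈ B', (G.induce (B' \ {v})).Preconnected) → B' = B

/-- `B` is a special block of `G`: a block such that every longest path contains an edge of `B`. -/
def IsSpecialBlock (G : SimpleGraph V) (B : Set V) : Prop :=
  IsBlock G B ∧ ∀ ⦃a b : V⦄ (p : G.Walk a b), IsLongestPath G p →
    ∃ i < p.length, p.getVert i ∈ B ∧ p.getVert (i + 1) ∈ B

lemma exists_isPath_of_isClique {G : SimpleGraph V} [Fintype V] {S : Set V}
    (hS : G.IsClique S) {s t : V} (hs : s ∈ S) (ht : t ∈ S) (hst : s ≠ t) :
    ∃ r : G.Walk s t, r.IsPath ∧ r.length + 1 = S.ncard ∧ ∀ u ∈ r.support, u ∈ S := by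
  classical
  obtain ⟨l, hl⟩ : ∃ l : List V, l = s :: (((S.toFinset.erase s).erase t).toList ++ [t]) :=
    ⟨_, rfl⟩
  have hlS : ∀ u ∈ l, u ∈ S := by
    subst hl
    simp only [List.mem_cons, List.mem_append, Finset.mem_toList, Finset.mem_erase,
      Set.mem_toFinset, List.not_mem_nil, or_false]
    rintro u (rfl | ⟨-, -, hu⟩ | rfl) <;> assumption
  have hnodup : l.Nodup := by
    subst hl
    simp +contextual [List.nodup_append, hst, Finset.nodup_toList]
  have hchain : l.IsChain G.Adj :=
    (hnodup.pairwise_of_forall_ne fun a ha b hb hab => hS (hlS a ha) (hlS b hb) hab).isChain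
  have hne : l ≠ [] := by simp [hl]
  refine ⟨(Walk.ofSupport l hne hchain).copy (by simp [hl]) (by simp [hl]), ?_, ?_, ?_⟩
  · rw [Walk.isPath_copy, Walk.isPath_def, Walk.support_ofSupport]; exact hnodup
  · have hcard : 2 ≤ S.toFinset.card :=
      Finset.one_lt_card.2 ⟨s, by simpa, t, by simpa, hst⟩
    simp only [hl, Walk.length_copy, Walk.length_ofSupport, List.length_cons, List.length_append,
      Finset.length_toList, List.length_nil, Set.ncard_eq_toFinset_card']
    rw [Finset.card_erase_of_mem (by simp [Ne.symm hst, ht]),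
      Finset.card_erase_of_mem (by simpa)]
    omega
  · simpa using hlS

section Detour

variable {G : SimpleGraph V} {x y : V} {p : G.Walk x y}

lemma IsFiberBetween.reverse (hp : IsFiberBetween G p) : IsFiberBetween G p.reverse :=
  ⟨hp.1.reverse, fun q hq => by simpa using hp.2 q.reverse hq.reverse⟩

lemma nodup_support_append_of_disjoint {u w : V} (hp : p.IsPath) {r : G.Walk u w}
    (hr : r.IsPath) (hrp : ∀ t ∈ r.support, t ∉ p.support) :
    (p.support ++ r.support).Nodup :=
  List.nodup_append.2 ⟨hp.support_nodup, hr.support_nodup, fun _ ha _ hb hab => hrp _ hb (hab ▸ ha)⟩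

/-- Replacing the segment of a fiber between positions `i < j` by an outside path `r` does not
lengthen it. -/
lemma IsFiberBetween.add_two_le_of_detour (hp : IsFiberBetween G p) {i j : ℕ} (hij : i < j)
    (hj : j ≤ p.length) {u w : V} {r : G.Walk u w} (hr : r.IsPath)
    (hrp : ∀ t ∈ r.support, t ∉ p.support) (hu : G.Adj (p.getVert i) u)
    (hw : G.Adj w (p.getVert j)) : i + r.length + 2 ≤ j := by
  classical
  let q : G.Walk x y := (p.take i).append (.cons hu (r.append (.cons hw (p.drop j))))
  have hnodup : (p.support.take (i + 1) ++ (r.support ++ p.support.drop j)).Nodup := by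
    have hsub : (p.support.take (i + 1) ++ p.support.drop j).Sublist p.support := by
      conv_rhs => rw [← List.take_append_drop (i + 1) p.support]
      exact (List.drop_sublist_drop_left p.support hij).append_left _
    refine (List.Perm.nodup_iff ?_).2
      ((nodup_support_append_of_disjoint hp.1 hr hrp).sublist (hsub.append_right _))
    rw [List.perm_iff_count]
    intro a
    simp only [List.count_append]
    omega
  have hq := hp.2 q ((Walk.isPath_def q).2 (by
    simpa [q, Walk.support_append, Walk.support_take, Nat.min_eq_left hj] using hnodup))
  simp only [q, Walk.length_append, Walk.length_cons, Walk.take_length, Walk.drop_length] at hq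
  omega

/-- Otherwise `p_0 … p_i r p_j p_{j-1} … p_{i+1} p_{j+1} … p_L` would be a longer fiber. -/
lemma IsFiberBetween.not_adj_succ_of_detour (hp : IsFiberBetween G p) {i j : ℕ} (hij : i < j)
    (hj : j < p.length) {u w : V} {r : G.Walk u w} (hr : r.IsPath)
    (hrp : ∀ t ∈ r.support, t ∉ p.support) (hu : G.Adj (p.getVert i) u)
    (hw : G.Adj w (p.getVert j)) : ¬ G.Adj (p.getVert (i + 1)) (p.getVert (j + 1)) := by
  classical
  intro hcross
  let seg : G.Walk (p.getVert (i + 1)) (p.getVert j) :=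
    ((p.drop (i + 1)).take (j - (i + 1))).copy rfl (by
      rw [Walk.drop_getVert]; congr 1; omega)
  let q : G.Walk x y := (p.take i).append (.cons hu (r.append (.cons hw
    (seg.reverse.append (.cons hcross (p.drop (j + 1)))))))
  have hnodup : (p.support.take (i + 1) ++ (r.support ++
      (((p.support.drop (i + 1)).take (j - i)).reverse ++ p.support.drop (j + 1)))).Nodup := by
    refine (List.Perm.nodup_iff ?_).2 (nodup_support_append_of_disjoint hp.1 hr hrp)
    conv_rhs => rw [← List.take_append_drop (i + 1) p.support,
      ← List.take_append_drop (j - i) (p.support.drop (i + 1)), List.drop_drop,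
      show i + 1 + (j - i) = j + 1 by omega]
    rw [List.perm_iff_count]
    intro a
    simp only [List.count_append, List.count_reverse]
    omega
  have hq := hp.2 q ((Walk.isPath_def q).2 (by
    simpa [q, seg, Walk.support_append, Walk.support_take, Walk.support_reverse,
      Nat.min_eq_left (show i + 1 ≤ p.length by omega),
      Nat.min_eq_left (show j + 1 ≤ p.length by omega),
      show j - (i + 1) + 1 = j - i by omega] using hnodup))
  simp only [q, seg, Walk.length_append, Walk.length_cons, Walk.take_length, Walk.drop_length,
    Walk.length_reverse, Walk.length_copy] at hq
  omega

end Detour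

section Attachments

variable {G : SimpleGraph V} {x y : V} {p : G.Walk x y} {z : V}

def compOff (p : G.Walk x y) (z : V) : Set V :=
  {u | ∃ w : G.Walk z u, ∀ t ∈ w.support, t ∉ p.support}

def attachIdx (p : G.Walk x y) (z : V) : Set ℕ :=
  {i | i ≤ p.length ∧ ∃ h ∈ compOff p z, G.Adj h (p.getVert i)}

lemma self_mem_compOff (hz : z ∉ p.support) : z ∈ compOff p z :=
  ⟨.nil, by simpa using hz⟩

lemma notMem_support_of_mem_compOff {u : V} (hu : u ∈ compOff p z) : u ∉ p.support := by
  obtain ⟨w, hw⟩ := hu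
  exact hw u w.end_mem_support

lemma mem_compOff_of_adj {u t : V} (hu : u ∈ compOff p z) (hadj : G.Adj u t)
    (ht : t ∉ p.support) : t ∈ compOff p z := by
  obtain ⟨w, hw⟩ := hu
  refine ⟨w.concat hadj, fun s hs => ?_⟩
  rw [Walk.support_concat, List.mem_append, List.mem_singleton] at hs
  rcases hs with hs | rfl
  exacts [hw s hs, ht]

lemma mem_support_of_adj_mem_compOff {u t : V} (hu : u ∈ compOff p z) (ht : t ∉ compOff p z)
    (hadj : G.Adj u t) : t ∈ p.support := by
  by_contra htp
  exact ht (mem_compOff_of_adj hu hadj htp)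

lemma exists_isPath_of_mem_compOff {u t : V} (hu : u ∈ compOff p z) (ht : t ∈ compOff p z) :
    ∃ r : G.Walk u t, r.IsPath ∧ ∀ s ∈ r.support, s ∉ p.support := by
  classical
  obtain ⟨w, hw⟩ := hu
  obtain ⟨w', hw'⟩ := ht
  refine ⟨(w.reverse.append w').toPath, (w.reverse.append w').toPath.2, fun s hs => ?_⟩
  have hs' := Walk.support_toPath_subset_support _ hs
  rw [Walk.mem_support_append_iff, Walk.support_reverse, List.mem_reverse] at hs'
  rcases hs' with hs' | hs'
  exacts [hw s hs', hw' s hs']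

@[simp]
lemma compOff_reverse : compOff p.reverse z = compOff p z := by
  simp [compOff, Walk.support_reverse]

lemma mem_attachIdx_reverse {i : ℕ} (hi : i ≤ p.length) :
    i ∈ attachIdx p.reverse z ↔ p.length - i ∈ attachIdx p z := by
  simp only [attachIdx, Set.mem_ofPred_eq, compOff_reverse, Walk.length_reverse,
    Walk.getVert_reverse]
  constructor
  · rintro ⟨-, h⟩; exact ⟨by omega, h⟩
  · rintro ⟨-, h⟩; exact ⟨hi, h⟩

lemma IsFiberBetween.add_two_le_of_mem_attachIdx (hp : IsFiberBetween G p) {i j : ℕ}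
    (hi : i ∈ attachIdx p z) (hj : j ∈ attachIdx p z) (hij : i < j) : i + 2 ≤ j := by
  obtain ⟨-, u, hu, hui⟩ := hi
  obtain ⟨hjL, w, hw, hwj⟩ := hj
  obtain ⟨r, hr, hrp⟩ := exists_isPath_of_mem_compOff hu hw
  have := hp.add_two_le_of_detour hij hjL hr hrp hui.symm hwj
  omega

end Attachments

section Connectivity

variable [Fintype V] {G : SimpleGraph V}

lemma IsKConnected.exists_walk_notMem_support (h2 : IsKConnected 2 G) {w a b : V} (ha : a ≠ w)
    (hb : b ≠ w) : ∃ q : G.Walk a b, w ∉ q.support := by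
  obtain ⟨q⟩ := (h2.2 {w} (by simp)).preconnected ⟨a, ha⟩ ⟨b, hb⟩
  refine ⟨q.map (Embedding.induce _).toHom, fun hw => ?_⟩
  obtain ⟨⟨t, ht⟩, -, htw⟩ := List.mem_map.1 ((Walk.support_map _ _) ▸ hw)
  exact ht (by simpa using htw)

variable {x y : V} {p : G.Walk x y} {z : V}

lemma IsKConnected.exists_adj_getVert_ne (h2 : IsKConnected 2 G) (hxy : x ≠ y) {u w : V}
    (hu : u ∈ compOff p z) (huw : u ≠ w) :
    ∃ h ∈ compOff p z, h ≠ w ∧ ∃ k ≤ p.length, G.Adj h (p.getVert k) ∧ p.getVert k ≠ w := by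
  obtain ⟨t, htp, htw⟩ : ∃ t ∈ p.support, t ≠ w := by
    by_cases hxw : x = w
    · exact ⟨y, p.end_mem_support, hxw ▸ hxy.symm⟩
    · exact ⟨x, p.start_mem_support, hxw⟩
  obtain ⟨q, hq⟩ := h2.exists_walk_notMem_support huw htw
  obtain ⟨d, hd, hd1, hd2⟩ :=
    q.exists_boundary_dart (compOff p z) hu (fun ht => notMem_support_of_mem_compOff ht htp)
  obtain ⟨k, hk, hkL⟩ := Walk.mem_support_iff_exists_getVert.1
    (mem_support_of_adj_mem_compOff hd1 hd2 d.adj)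
  refine ⟨d.fst, hd1, ?_, k, hkL, hk ▸ d.adj, ?_⟩
  · exact fun h => hq (h ▸ q.dart_fst_mem_support_of_mem_darts hd)
  · exact fun h => hq (h ▸ hk ▸ q.dart_snd_mem_support_of_mem_darts hd)

lemma IsKConnected.exists_mem_attachIdx_lt (h2 : IsKConnected 2 G) (hxy : x ≠ y)
    (hz : z ∉ p.support) : ∃ i ∈ attachIdx p z, ∃ j ∈ attachIdx p z, i < j := by
  have hzH := self_mem_compOff hz
  obtain ⟨h, hh, -, i, hiL, hhi, -⟩ :=
    h2.exists_adj_getVert_ne hxy hzH (w := x) (fun h => hz (h ▸ p.start_mem_support))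
  obtain ⟨h', hh', -, j, hjL, hh'j, hji⟩ := h2.exists_adj_getVert_ne hxy hzH
    (w := p.getVert i) (fun h => hz (h ▸ p.getVert_mem_support i))
  have hi : i ∈ attachIdx p z := ⟨hiL, h, hh, hhi⟩
  have hj : j ∈ attachIdx p z := ⟨hjL, h', hh', hh'j⟩
  rcases lt_or_gt_of_ne (show i ≠ j by rintro rfl; exact hji rfl) with hij | hji
  exacts [⟨i, hi, j, hj, hij⟩, ⟨j, hj, i, hi, hji⟩]

end Connectivity

section Independence

variable {G : SimpleGraph V} {x y : V} {p : G.Walk x y}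
  (halpha : ∀ A : Set V, x ∉ A → y ∉ A → IsIndepSet G A → A.ncard ≤ 2)
include halpha

lemma adj_of_not_adj_of_not_adj {a b c : V} (hab : a ≠ b) (hac : a ≠ c) (hbc : b ≠ c)
    (hx : x ∉ ({a, b, c} : Set V)) (hy : y ∉ ({a, b, c} : Set V))
    (hab' : ¬ G.Adj a b) (hac' : ¬ G.Adj a c) : G.Adj b c := by
  by_contra hbc'
  have hindep : IsIndepSet G {a, b, c} := by
    intro s hs t ht hst
    simp only [Set.mem_insert_iff, Set.mem_singleton_iff] at hs ht
    rcases hs with rfl | rfl | rfl <;> rcases ht with rfl | rfl | rfl <;>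
      simp_all [G.adj_comm]
  have := halpha _ hx hy hindep
  rw [Set.ncard_insert_of_notMem (by simp [hab, hac]), Set.ncard_pair hbc] at this
  omega

variable (hp : p.IsPath)
include hp

lemma adj_of_not_adj_getVert {a b : V} (ha : a ∉ p.support) (hb : b ∉ p.support) (hab : a ≠ b)
    {k : ℕ} (hk0 : 0 < k) (hkL : k < p.length) (hak : ¬ G.Adj a (p.getVert k))
    (hbk : ¬ G.Adj b (p.getVert k)) : G.Adj a b := by
  have hkp := p.getVert_mem_support k
  have hkx := (hp.getVert_eq_start_iff hkL.le).not.2 hk0.ne'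
  have hky := (hp.getVert_eq_end_iff hkL.le).not.2 hkL.ne
  refine adj_of_not_adj_of_not_adj halpha (fun h => ha (h ▸ hkp)) (fun h => hb (h ▸ hkp)) hab
    ?_ ?_ (fun h => hak h.symm) (fun h => hbk h.symm)
  · simp only [Set.mem_insert_iff, Set.mem_singleton_iff, not_or]
    exact ⟨Ne.symm hkx, fun h => ha (h ▸ p.start_mem_support),
      fun h => hb (h ▸ p.start_mem_support)⟩
  · simp only [Set.mem_insert_iff, Set.mem_singleton_iff, not_or]
    exact ⟨Ne.symm hky, fun h => ha (h ▸ p.end_mem_support),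
      fun h => hb (h ▸ p.end_mem_support)⟩

lemma adj_getVert_of_not_adj {a : V} (ha : a ∉ p.support) {i j : ℕ} (hi0 : 0 < i) (hij : i < j)
    (hjL : j < p.length) (hai : ¬ G.Adj a (p.getVert i)) (haj : ¬ G.Adj a (p.getVert j)) :
    G.Adj (p.getVert i) (p.getVert j) := by
  have hix := (hp.getVert_eq_start_iff (hij.trans hjL).le).not.2 hi0.ne'
  have hiy := (hp.getVert_eq_end_iff (hij.trans hjL).le).not.2 (hij.trans hjL).ne
  have hjx := (hp.getVert_eq_start_iff hjL.le).not.2 (hi0.trans hij).ne'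
  have hjy := (hp.getVert_eq_end_iff hjL.le).not.2 hjL.ne
  refine adj_of_not_adj_of_not_adj (a := a) (b := p.getVert i) (c := p.getVert j) halpha
    (fun h => ha (h.symm ▸ p.getVert_mem_support i))
    (fun h => ha (h.symm ▸ p.getVert_mem_support j))
    (fun h => hij.ne (hp.getVert_injOn (by simp; omega) (by simp; omega) h)) ?_ ?_ hai haj
  · simp only [Set.mem_insert_iff, Set.mem_singleton_iff, not_or]
    exact ⟨fun h => ha (h ▸ p.start_mem_support), Ne.symm hix, Ne.symm hjx⟩
  · simp only [Set.mem_insert_iff, Set.mem_singleton_iff, not_or]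
    exact ⟨fun h => ha (h ▸ p.end_mem_support), Ne.symm hiy, Ne.symm hjy⟩

lemma isClique_compOff_of_notMem_attachIdx {z : V} {k : ℕ} (hk0 : 0 < k) (hkL : k < p.length)
    (hk : k ∉ attachIdx p z) : G.IsClique (compOff p z) := fun a ha b hb hab =>
  adj_of_not_adj_getVert halpha hp (notMem_support_of_mem_compOff ha)
    (notMem_support_of_mem_compOff hb) hab hk0 hkL (fun h => hk ⟨hkL.le, a, ha, h⟩)
    (fun h => hk ⟨hkL.le, b, hb, h⟩)

end Independence

section Structure

variable {G : SimpleGraph V} {x y : V} {p : G.Walk x y} {z : V}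

lemma IsFiberBetween.length_le_succ_of_mem_attachIdx (hp : IsFiberBetween G p)
    (halpha : ∀ A : Set V, x ∉ A → y ∉ A → IsIndepSet G A → A.ncard ≤ 2)
    (hz : z ∉ p.support) {i j : ℕ} (hi : i ∈ attachIdx p z) (hj : j ∈ attachIdx p z)
    (hij : i < j) : p.length ≤ j + 1 := by
  by_contra! hjL
  have hij2 := hp.add_two_le_of_mem_attachIdx hi hj hij
  have hzH := self_mem_compOff hz
  have hz_succ : ∀ k ∈ attachIdx p z, k + 1 < p.length → ¬ G.Adj z (p.getVert (k + 1)) :=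
    fun k hk hkL hadj => by
      have := hp.add_two_le_of_mem_attachIdx hk ⟨hkL.le, z, hzH, hadj⟩ (k.lt_succ_self)
      omega
  obtain ⟨-, u, hu, hui⟩ := hi
  obtain ⟨-, w, hw, hwj⟩ := hj
  obtain ⟨r, hr, hrp⟩ := exists_isPath_of_mem_compOff hu hw
  exact hp.not_adj_succ_of_detour hij (by omega) hr hrp hui.symm hwj
    (adj_getVert_of_not_adj halpha hp.1 hz (by omega) (by omega) hjL
      (hz_succ i ⟨by omega, u, hu, hui⟩ (by omega)) (hz_succ j ⟨by omega, w, hw, hwj⟩ hjL))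

lemma IsFiberBetween.le_one_of_mem_attachIdx (hp : IsFiberBetween G p)
    (halpha : ∀ A : Set V, x ∉ A → y ∉ A → IsIndepSet G A → A.ncard ≤ 2)
    (hz : z ∉ p.support) {i j : ℕ} (hi : i ∈ attachIdx p z) (hj : j ∈ attachIdx p z)
    (hij : i < j) : i ≤ 1 := by
  have hjL := hj.1
  have hi' : p.length - j ∈ attachIdx p.reverse z :=
    (mem_attachIdx_reverse (by omega)).2 (by rwa [Nat.sub_sub_self hjL])
  have hj' : p.length - i ∈ attachIdx p.reverse z :=
    (mem_attachIdx_reverse (by omega)).2 (by rwa [Nat.sub_sub_self (hij.le.trans hjL)])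
  have := hp.reverse.length_le_succ_of_mem_attachIdx (fun A hy hx => halpha A hx hy)
    (by simpa using hz) hi' hj' (by omega)
  rw [Walk.length_reverse] at this
  omega

lemma IsFiberBetween.attachIdx_eq_pair [Fintype V] (hp : IsFiberBetween G p)
    (h2 : IsKConnected 2 G) (hxy : x ≠ y)
    (halpha : ∀ A : Set V, x ∉ A → y ∉ A → IsIndepSet G A → A.ncard ≤ 2)
    (hz : z ∉ p.support) :
    ∃ a b, attachIdx p z = {a, b} ∧ a ≤ 1 ∧ a + 2 ≤ b ∧ p.length ≤ b + 1 ∧ b ≤ p.length := by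
  have key : ∀ a ∈ attachIdx p z, ∀ b ∈ attachIdx p z, a < b →
      a + 2 ≤ b ∧ a ≤ 1 ∧ p.length ≤ b + 1 := fun a ha b hb hab =>
    ⟨hp.add_two_le_of_mem_attachIdx ha hb hab, hp.le_one_of_mem_attachIdx halpha hz ha hb hab,
      hp.length_le_succ_of_mem_attachIdx halpha hz ha hb hab⟩
  obtain ⟨a, ha, b, hb, hab⟩ := h2.exists_mem_attachIdx_lt hxy hz
  refine ⟨a, b, Set.Subset.antisymm (fun k hk => ?_) ?_, (key a ha b hb hab).2.1,
    (key a ha b hb hab).1, (key a ha b hb hab).2.2, hb.1⟩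
  · have hkL := hk.1
    have := key a ha b hb hab
    rcases lt_trichotomy k a with hka | rfl | hak
    · have := key k hk a ha hka; omega
    · exact Or.inl rfl
    rcases lt_trichotomy k b with hkb | rfl | hbk
    · have := key a ha k hk hak; have := key k hk b hb hkb; omega
    · exact Or.inr rfl
    · have := key b hb k hk hbk; omega
  · rintro k (rfl | rfl)
    exacts [ha, hb]

end Structure

section InteriorAttachment

variable [Fintype V] {G : SimpleGraph V} {x y : V} {p : G.Walk x y} {z : V}

lemma degree_le_ncard_compOff_add_one [DecidableRel G.Adj] (hz : z ∉ p.support) {a b : ℕ}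
    (hA : attachIdx p z = {a, b}) : G.degree z ≤ (compOff p z).ncard + 1 := by
  classical
  have hzH := self_mem_compOff hz
  have hsub : G.neighborFinset z ⊆
      insert (p.getVert a) (insert (p.getVert b) ((compOff p z).toFinset.erase z)) := by
    intro t ht
    rw [mem_neighborFinset] at ht
    by_cases htp : t ∈ p.support
    · obtain ⟨i, rfl, hiL⟩ := Walk.mem_support_iff_exists_getVert.1 htp
      have hi : i ∈ attachIdx p z := ⟨hiL, z, hzH, ht⟩
      rw [hA] at hi
      rcases hi with rfl | rfl <;> simp
    · simp [G.ne_of_adj ht |>.symm, mem_compOff_of_adj hzH ht htp]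
  calc G.degree z = (G.neighborFinset z).card := (G.card_neighborFinset_eq_degree z).symm
    _ ≤ ((compOff p z).toFinset.erase z).card + 2 :=
      (Finset.card_le_card hsub).trans <| (Finset.card_insert_le _ _).trans <|
        Nat.add_le_add_right (Finset.card_insert_le _ _) 1
    _ = (compOff p z).ncard + 1 := by
      rw [Finset.card_erase_of_mem (by simpa), Set.ncard_eq_toFinset_card']
      have : 0 < (compOff p z).toFinset.card := Finset.card_pos.2 ⟨z, by simpa⟩
      omega

lemma IsKConnected.exists_adj_getVert_of_attachIdx_eq_pair (h2 : IsKConnected 2 G)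
    (hxy : x ≠ y) {i j : ℕ} (hA : attachIdx p z = {i, j}) :
    ∃ s ∈ compOff p z, ∃ t ∈ compOff p z, G.Adj s (p.getVert i) ∧ G.Adj t (p.getVert j) ∧
      (s ≠ t ∨ (compOff p z).ncard = 1) := by
  obtain ⟨-, s, hs, hsi⟩ : i ∈ attachIdx p z := hA ▸ Or.inl rfl
  obtain ⟨-, t, ht, htj⟩ : j ∈ attachIdx p z := hA ▸ Or.inr rfl
  by_contra! huniq
  obtain rfl := (huniq s hs t ht hsi htj).1
  -- otherwise `s` would separate the rest of the component from the fiber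
  obtain ⟨u, hu, hus⟩ : ∃ u ∈ compOff p z, u ≠ s := by
    by_contra! h
    exact (huniq s hs s ht hsi htj).2
      (Set.ncard_eq_one.2 ⟨s, Set.eq_singleton_iff_unique_mem.2 ⟨hs, h⟩⟩)
  obtain ⟨h, hh, hhs, k, hkL, hhk, -⟩ := h2.exists_adj_getVert_ne hxy hu hus
  have hk : k ∈ attachIdx p z := ⟨hkL, h, hh, hhk⟩
  rw [hA] at hk
  rcases hk with rfl | rfl
  · exact hhs (huniq h hh s hs hhk htj).1
  · exact hhs (huniq s hs h hh hsi hhk).1.symm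

lemma IsFiberBetween.ncard_compOff_add_two_le (hp : IsFiberBetween G p) (h2 : IsKConnected 2 G)
    (hxy : x ≠ y) (halpha : ∀ A : Set V, x ∉ A → y ∉ A → IsIndepSet G A → A.ncard ≤ 2)
    {b : ℕ} (hA : attachIdx p z = {1, b}) (hb : 3 ≤ b) : (compOff p z).ncard + 2 ≤ b := by
  have hbL : b ≤ p.length := (hA ▸ Or.inr rfl : b ∈ attachIdx p z).1
  have hclique : G.IsClique (compOff p z) :=
    isClique_compOff_of_notMem_attachIdx halpha hp.1 (k := 2) (by omega) (by omega)
      (by rw [hA]; simp only [Set.mem_insert_iff, Set.mem_singleton_iff]; omega)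
  obtain ⟨s, hs, t, ht, hs1, htb, hst⟩ := h2.exists_adj_getVert_of_attachIdx_eq_pair hxy hA
  obtain ⟨r, hr, hrlen, hrH⟩ : ∃ r : G.Walk s t, r.IsPath ∧
      r.length + 1 = (compOff p z).ncard ∧ ∀ u ∈ r.support, u ∈ compOff p z := by
    rcases hst with hst | h1
    · exact exists_isPath_of_isClique hclique hs ht hst
    · obtain ⟨c, hc⟩ := Set.ncard_eq_one.1 h1
      obtain rfl : s = t := (hc ▸ hs : s ∈ ({c} : Set V)).trans (hc ▸ ht : t ∈ ({c} : Set V)).symm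
      exact ⟨.nil, by simp, by simp [h1], by simpa⟩
  have := hp.add_two_le_of_detour (i := 1) (by omega) hbL hr
    (fun u hu => notMem_support_of_mem_compOff (hrH u hu)) hs1.symm htb
  omega

lemma le_degree_getVert_one_of_forall_adj [DecidableRel G.Adj] (hp : p.IsPath)
    (hL : 2 ≤ p.length) (hall : ∀ h ∈ compOff p z, G.Adj h (p.getVert 1)) :
    (compOff p z).ncard + 2 ≤ G.degree (p.getVert 1) := by
  classical
  have hoff : ∀ k, p.getVert k ∉ (compOff p z).toFinset := fun k hk =>
    notMem_support_of_mem_compOff (Set.mem_toFinset.1 hk) (p.getVert_mem_support k)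
  have h02 : p.getVert 0 ≠ p.getVert 2 := fun h => by
    have := hp.getVert_injOn (by simp) (by simp; omega) h; omega
  have hsub : insert (p.getVert 0) (insert (p.getVert 2) (compOff p z).toFinset) ⊆
      G.neighborFinset (p.getVert 1) := by
    intro t ht
    rw [mem_neighborFinset]
    simp only [Finset.mem_insert, Set.mem_toFinset] at ht
    rcases ht with rfl | rfl | ht
    · exact (p.adj_getVert_succ (by omega)).symm
    · exact p.adj_getVert_succ (by omega)
    · exact (hall t ht).symm
  have := Finset.card_le_card hsub
  rwa [Finset.card_insert_of_notMem (by rw [Finset.mem_insert, not_or]; exact ⟨h02, hoff 0⟩),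
    Finset.card_insert_of_notMem (hoff 2),
    ← Set.ncard_eq_toFinset_card', card_neighborFinset_eq_degree] at this

lemma le_degree_getVert_one_of_not_adj [DecidableRel G.Adj]
    (halpha : ∀ A : Set V, x ∉ A → y ∉ A → IsIndepSet G A → A.ncard ≤ 2) (hp : p.IsPath)
    {b : ℕ} (hA : attachIdx p z = {1, b}) (hb : 1 < b) {h₀ : V} (hh₀ : h₀ ∈ compOff p z)
    (hnadj : ¬ G.Adj h₀ (p.getVert 1)) : b ≤ G.degree (p.getVert 1) := by
  classical
  obtain ⟨h1L, w, hw, hw1⟩ : 1 ∈ attachIdx p z := hA ▸ Or.inl rfl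
  have hbL : b ≤ p.length := (hA ▸ Or.inr rfl : b ∈ attachIdx p z).1
  have hadj : ∀ k ∈ (Finset.range b).erase 1, G.Adj (p.getVert 1) (p.getVert k) := by
    intro k hk
    rw [Finset.mem_erase, Finset.mem_range] at hk
    rcases Nat.lt_or_gt_of_ne hk.1 with hk0 | hk1
    · obtain rfl : k = 0 := by omega
      exact (p.adj_getVert_succ (by omega)).symm
    · refine adj_getVert_of_not_adj halpha hp (notMem_support_of_mem_compOff hh₀) one_pos hk1
        (by omega) hnadj fun h => ?_
      have hk' : k ∈ attachIdx p z := ⟨by omega, h₀, hh₀, h⟩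
      rw [hA, Set.mem_insert_iff, Set.mem_singleton_iff] at hk'
      omega
  have hsub : insert w (((Finset.range b).erase 1).image p.getVert) ⊆
      G.neighborFinset (p.getVert 1) := by
    intro t ht
    rw [mem_neighborFinset]
    rcases Finset.mem_insert.1 ht with rfl | ht
    · exact hw1.symm
    · obtain ⟨k, hk, rfl⟩ := Finset.mem_image.1 ht
      exact hadj k hk
  have hw_notMem : w ∉ ((Finset.range b).erase 1).image p.getVert := by
    simp only [Finset.mem_image, not_exists, not_and]
    exact fun k _ hk => notMem_support_of_mem_compOff hw (hk ▸ p.getVert_mem_support k)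
  have hinj : Set.InjOn p.getVert ((Finset.range b).erase 1 : Set ℕ) := fun i hi j hj h =>
    hp.getVert_injOn (by simp at hi ⊢; omega) (by simp at hj ⊢; omega) h
  have := Finset.card_le_card hsub
  rw [Finset.card_insert_of_notMem hw_notMem, Finset.card_image_of_injOn hinj,
    Finset.card_erase_of_mem (by simpa), Finset.card_range, card_neighborFinset_eq_degree] at this
  omega

lemma IsFiberBetween.false_of_attachIdx_eq_one_pair [DecidableRel G.Adj]
    (hp : IsFiberBetween G p) (h2 : IsKConnected 2 G) (hxy : x ≠ y)
    (halpha : ∀ A : Set V, x ∉ A → y ∉ A → IsIndepSet G A → A.ncard ≤ 2)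
    (hz : z ∉ p.support) (hdeg : G.degree z = G.maxDegree) {b : ℕ}
    (hA : attachIdx p z = {1, b}) (hb : 3 ≤ b) : False := by
  have hbL : b ≤ p.length := (hA ▸ Or.inr rfl : b ∈ attachIdx p z).1
  suffices ∃ w, (compOff p z).ncard + 2 ≤ G.degree w by
    obtain ⟨w, hw⟩ := this
    have := G.degree_le_maxDegree w
    have := degree_le_ncard_compOff_add_one hz hA
    omega
  refine ⟨p.getVert 1, ?_⟩
  by_cases hall : ∀ h ∈ compOff p z, G.Adj h (p.getVert 1)
  · exact le_degree_getVert_one_of_forall_adj hp.1 (by omega) hall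
  · push Not at hall
    obtain ⟨h₀, hh₀, hnadj⟩ := hall
    exact (hp.ncard_compOff_add_two_le h2 hxy halpha hA hb).trans
      (le_degree_getVert_one_of_not_adj halpha hp.1 hA (by omega) hh₀ hnadj)

end InteriorAttachment

section EndAttachment

variable {G : SimpleGraph V} {x y : V} {p : G.Walk x y} {z : V}

lemma attachIdx_reverse_of_eq_pair {a b : ℕ} (hA : attachIdx p z = {a, b}) :
    attachIdx p.reverse z = {p.length - b, p.length - a} := by
  have haL : a ≤ p.length := (hA ▸ Or.inl rfl : a ∈ attachIdx p z).1
  have hbL : b ≤ p.length := (hA ▸ Or.inr rfl : b ∈ attachIdx p z).1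
  ext i
  simp only [Set.mem_insert_iff, Set.mem_singleton_iff]
  constructor
  · intro hi
    have hiL : i ≤ p.length := by simpa using hi.1
    rw [mem_attachIdx_reverse hiL, hA, Set.mem_insert_iff, Set.mem_singleton_iff] at hi
    omega
  · intro hi
    rw [mem_attachIdx_reverse (by omega), hA, Set.mem_insert_iff, Set.mem_singleton_iff]
    omega

lemma IsFiberBetween.exists_cliques_of_attachIdx_eq_ends [Fintype V] (hp : IsFiberBetween G p)
    (h2 : IsKConnected 2 G) (hxy : x ≠ y)
    (halpha : ∀ A : Set V, x ∉ A → y ∉ A → IsIndepSet G A → A.ncard ≤ 2)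
    (hz : z ∉ p.support) (hA : attachIdx p z = {0, p.length}) :
    ∃ A B : Set V, A ∪ B = ({x, y} : Set V)ᶜ ∧ Disjoint A B ∧
      A.Nonempty ∧ B.Nonempty ∧ G.IsClique A ∧ G.IsClique B ∧
      ∀ a ∈ A, ∀ b ∈ B, ¬ G.Adj a b := by
  have hzH := self_mem_compOff hz
  have hnadj : ∀ h ∈ compOff p z, ∀ k, 0 < k → k < p.length → ¬ G.Adj h (p.getVert k) := by
    intro h hh k hk0 hkL hadj
    have hk : k ∈ attachIdx p z := ⟨hkL.le, h, hh, hadj⟩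
    rw [hA, Set.mem_insert_iff, Set.mem_singleton_iff] at hk
    omega
  have hL : 2 ≤ p.length := by
    have hL0 : p.length ≠ 0 := fun h => hxy (Walk.eq_of_length_eq_zero h)
    have := hp.add_two_le_of_mem_attachIdx (hA ▸ Or.inl rfl : 0 ∈ attachIdx p z)
      (hA ▸ Or.inr rfl : p.length ∈ attachIdx p z) (Nat.pos_of_ne_zero hL0)
    omega
  have hoff : ∀ t ∉ p.support, t ∈ compOff p z := by
    intro t ht
    by_contra htH
    obtain ⟨a, b, hA', ha, hab, hb, hbL⟩ := hp.attachIdx_eq_pair h2 hxy halpha ht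
    obtain ⟨k, hk0, hkL, hka, hkb⟩ : ∃ k, 0 < k ∧ k < p.length ∧ k ≠ a ∧ k ≠ b := by
      by_cases ha1 : a = 1
      exacts [⟨2, by omega, by omega, by omega, by omega⟩,
        ⟨1, by omega, by omega, by omega, by omega⟩]
    have hk : k ∉ attachIdx p t := by
      rw [hA', Set.mem_insert_iff, Set.mem_singleton_iff]; omega
    exact htH <| mem_compOff_of_adj hzH (adj_of_not_adj_getVert halpha hp.1 hz ht
      (fun h => htH (h ▸ hzH)) hk0 hkL (hnadj z hzH k hk0 hkL)
      (fun h => hk ⟨hkL.le, t, self_mem_compOff ht, h⟩)) ht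
  refine ⟨{t | ∃ k, 0 < k ∧ k < p.length ∧ p.getVert k = t}, compOff p z, ?_, ?_,
    ⟨p.getVert 1, 1, one_pos, hL, rfl⟩, ⟨z, hzH⟩, ?_, ?_, ?_⟩
  · ext t
    simp only [Set.mem_union, Set.mem_ofPred_eq, Set.mem_compl_iff, Set.mem_insert_iff,
      Set.mem_singleton_iff, not_or]
    constructor
    · rintro (⟨k, hk0, hkL, rfl⟩ | ht)
      · exact ⟨(hp.1.getVert_eq_start_iff hkL.le).not.2 hk0.ne',
          (hp.1.getVert_eq_end_iff hkL.le).not.2 hkL.ne⟩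
      · exact ⟨fun h => notMem_support_of_mem_compOff ht (h ▸ p.start_mem_support),
          fun h => notMem_support_of_mem_compOff ht (h ▸ p.end_mem_support)⟩
    · rintro ⟨htx, hty⟩
      by_cases htp : t ∈ p.support
      · obtain ⟨k, rfl, hkL⟩ := Walk.mem_support_iff_exists_getVert.1 htp
        refine Or.inl ⟨k, Nat.pos_of_ne_zero fun h => htx ?_,
          lt_of_le_of_ne hkL fun h => hty ?_, rfl⟩
        exacts [(hp.1.getVert_eq_start_iff hkL).2 h, (hp.1.getVert_eq_end_iff hkL).2 h]
      · exact Or.inr (hoff t htp)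
  · rw [Set.disjoint_left]
    rintro _ ⟨k, -, -, rfl⟩ hk
    exact notMem_support_of_mem_compOff hk (p.getVert_mem_support k)
  · rintro _ ⟨i, hi0, hiL, rfl⟩ _ ⟨j, hj0, hjL, rfl⟩ hij
    rcases lt_or_gt_of_ne (fun h : i = j => hij (h ▸ rfl)) with hij | hji
    · exact adj_getVert_of_not_adj halpha hp.1 hz hi0 hij hjL (hnadj z hzH i hi0 hiL)
        (hnadj z hzH j hj0 hjL)
    · exact (adj_getVert_of_not_adj halpha hp.1 hz hj0 hji hiL (hnadj z hzH j hj0 hjL)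
        (hnadj z hzH i hi0 hiL)).symm
  · exact isClique_compOff_of_notMem_attachIdx halpha hp.1 one_pos (by omega)
      fun h => hnadj _ h.2.choose_spec.1 1 one_pos (by omega) h.2.choose_spec.2
  · rintro _ ⟨k, hk0, hkL, rfl⟩ b hb hadj
    exact hnadj b hb k hk0 hkL hadj.symm

end EndAttachment

/-- if `G` is 2-connected, `x ≠ y`, and `α(G - {x,y}) ≤ 2`, then every
`xy`-fiber contains every vertex of maximum degree, or `G - {x,y}` is the disjoint union of
two complete graphs. -/
theorem stmt15 [Fintype V] (G : SimpleGraph V) [DecidableRel G.Adj] (x y : V) (hxy : x ≠ y)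
    (h2 : IsKConnected 2 G)
    (halpha : ∀ A : Set V, x ∉ A → y ∉ A → IsIndepSet G A → A.ncard ≤ 2) :
    (∀ (p : G.Walk x y), IsFiberBetween G p →
      ∀ v, G.degree v = G.maxDegree → v ∈ p.support) ∨
    (∃ A B : Set V, A ∪ B = ({x, y} : Set V)ᶜ ∧ Disjoint A B ∧
      A.Nonempty ∧ B.Nonempty ∧ G.IsClique A ∧ G.IsClique B ∧
      ∀ a ∈ A, ∀ b ∈ B, ¬ G.Adj a b) := by
  refine or_iff_not_imp_left.2 fun hfib => ?_
  push Not at hfib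
  obtain ⟨p, hp, z, hdeg, hz⟩ := hfib
  obtain ⟨a, b, hA, ha, hab, hb, hbL⟩ := hp.attachIdx_eq_pair h2 hxy halpha hz
  obtain rfl | rfl : a = 1 ∨ a = 0 := by omega
  · exact (hp.false_of_attachIdx_eq_one_pair h2 hxy halpha hz hdeg hA (by omega)).elim
  obtain hb' | rfl : b = p.length - 1 ∨ b = p.length := by omega
  · have hA' : attachIdx p.reverse z = {1, p.reverse.length} := by
      rw [attachIdx_reverse_of_eq_pair hA, Walk.length_reverse, hb']
      congr 1; omega
    exact (hp.reverse.false_of_attachIdx_eq_one_pair h2 hxy.symm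
      (fun A hy hx => halpha A hx hy) (by simpa using hz) hdeg hA' (by simp; omega)).elim
  · exact hp.exists_cliques_of_attachIdx_eq_ends h2 hxy halpha hz hA

end GallaiFormal
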